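/- Suppose u : [0,T] × ℝⁿ → ℝ is continuous with u(0,·) = 0, and there exist A, B > 0 such that |u(t,x)| ≤ A e^{B|x|}. If additionally u(t,x) = ∫₀ᵗ ∫_V K(t-τ, x-y) g(τ,y) dy dτ where V ⊆ ℝⁿ is compact, g is continuous and bounded on [0,T] × V, and 0 ≤ K(s,z) ≤ K₁ e^{-|z|²/(8T)} for all s ∈ (0,T], |z| ≥ 1, then there exist A', B' > 0 with |u(t,x)| ≤ A' e^{-B'|x|²} for all t ∈ [0,T] and |x| ≥ 1 + sup_{y∈V}|y|. -/

import Mathlib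

/-!
Let `M = sup_V ‖y‖`. For `‖x‖ ≥ 1 + M` every `y ∈ V` satisfies `‖x - y‖ ≥ ‖x‖ - M ≥ 1`, so the
Gaussian bound on `K` applies throughout the representation formula. Bounding the integrand by its
supremum gives `|u(t,x)| ≤ K₁ ‖g‖_∞ |V| T e^{-(‖x‖ - M)²/(8T)}`, and `(r - M)² ≥ r²/2 - M²` turns
this into Gaussian decay in `‖x‖`.
-/

open Set MeasureTheory

lemma norm_setIntegral_mul_le_of_bounds {α : Type*} [MeasurableSpace α] {μ : Measure α}
    {s : Set α} (hs : μ s < ⊤) {k f : α → ℝ} {a C : ℝ}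
    (hk : ∀ y ∈ s, 0 ≤ k y ∧ k y ≤ a) (hf : ∀ y ∈ s, |f y| ≤ C) :
    ‖∫ y in s, k y * f y ∂μ‖ ≤ a * C * μ.real s := by
  refine norm_setIntegral_le_of_norm_le_const hs fun y hy => ?_
  obtain ⟨hk0, hka⟩ := hk y hy
  rw [Real.norm_eq_abs, abs_mul, abs_of_nonneg hk0]
  exact mul_le_mul hka (hf y hy) (abs_nonneg _) (hk0.trans hka)

lemma norm_setIntegral_Ioc_le_mul {F : ℝ → ℝ} {B t : ℝ} (ht : 0 ≤ t)
    (hF : ∀ τ ∈ Ioo 0 t, ‖F τ‖ ≤ B) :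
    ‖∫ τ in Ioc 0 t, F τ‖ ≤ B * t := by
  have h := norm_setIntegral_le_of_norm_le_const (measure_Ioo_lt_top (μ := volume)) hF
  rwa [Real.volume_real_Ioo_of_le ht, sub_zero, ← integral_Ioc_eq_integral_Ioo] at h

section Duhamel

variable {E : Type*} [NormedAddCommGroup E] {V : Set E} {K : ℝ → E → ℝ} {g : ℝ → E → ℝ}
  {T K₁ C M : ℝ}

lemma kernel_le_of_one_add_le_norm (hK₁ : 0 ≤ K₁)
    (hK : ∀ s ∈ Ioc 0 T, ∀ z, 1 ≤ ‖z‖ → 0 ≤ K s z ∧ K s z ≤ K₁ * Real.exp (-‖z‖ ^ 2 / (8 * T)))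
    (hM : ∀ y ∈ V, ‖y‖ ≤ M) {s : ℝ} (hs : s ∈ Ioc 0 T) {x : E} (hx : 1 + M ≤ ‖x‖)
    {y : E} (hy : y ∈ V) :
    0 ≤ K s (x - y) ∧ K s (x - y) ≤ K₁ * Real.exp (-(‖x‖ - M) ^ 2 / (8 * T)) := by
  have hdist : ‖x‖ - M ≤ ‖x - y‖ := by linarith [norm_sub_norm_le x y, hM y hy]
  obtain ⟨hK0, hKle⟩ := hK s hs (x - y) (by linarith)
  refine ⟨hK0, hKle.trans ?_⟩
  have hT : 0 ≤ 8 * T := by linarith [hs.1, hs.2]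
  gcongr
  nlinarith

variable [MeasurableSpace E] {μ : Measure E}

lemma norm_duhamel_integral_le (hK₁ : 0 ≤ K₁) (hV : μ V < ⊤)
    (hK : ∀ s ∈ Ioc 0 T, ∀ z, 1 ≤ ‖z‖ → 0 ≤ K s z ∧ K s z ≤ K₁ * Real.exp (-‖z‖ ^ 2 / (8 * T)))
    (hg : ∀ τ ∈ Icc 0 T, ∀ y ∈ V, |g τ y| ≤ C) (hM : ∀ y ∈ V, ‖y‖ ≤ M)
    {t : ℝ} (ht : t ∈ Icc 0 T) {x : E} (hx : 1 + M ≤ ‖x‖) :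
    ‖∫ τ in Ioc 0 t, ∫ y in V, K (t - τ) (x - y) * g τ y ∂μ‖
      ≤ K₁ * Real.exp (-(‖x‖ - M) ^ 2 / (8 * T)) * C * μ.real V * t := by
  refine norm_setIntegral_Ioc_le_mul ht.1 fun τ hτ => norm_setIntegral_mul_le_of_bounds hV
    (fun y hy => kernel_le_of_one_add_le_norm hK₁ hK hM ?_ hx hy)
    (fun y hy => hg τ ⟨hτ.1.le, hτ.2.le.trans ht.2⟩ y hy)
  exact ⟨by linarith [hτ.2], by linarith [hτ.1, ht.2]⟩

end Duhamel

lemma exp_neg_sq_sub_div_le {T : ℝ} (hT : 0 < T) (r M : ℝ) :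
    Real.exp (-(r - M) ^ 2 / (8 * T)) ≤
      Real.exp (M ^ 2 / (8 * T)) * Real.exp (-(1 / (16 * T)) * r ^ 2) := by
  rw [← Real.exp_add, Real.exp_le_exp]
  have key : r ^ 2 ≤ 2 * (r - M) ^ 2 + 2 * M ^ 2 := by nlinarith [sq_nonneg (r - 2 * M)]
  have expand : M ^ 2 / (8 * T) + -(1 / (16 * T)) * r ^ 2 - -(r - M) ^ 2 / (8 * T)
      = (2 * (r - M) ^ 2 + 2 * M ^ 2 - r ^ 2) / (16 * T) := by
    field_simp
    ring
  have : 0 ≤ (2 * (r - M) ^ 2 + 2 * M ^ 2 - r ^ 2) / (16 * T) := by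
    apply div_nonneg <;> linarith
  linarith

theorem representation_formula_exponential_decay_general {n : ℕ}
    (T : ℝ) (hT : 0 < T)
    (u g : ℝ → EuclideanSpace ℝ (Fin n) → ℝ)
    (K : ℝ → EuclideanSpace ℝ (Fin n) → ℝ) (K₁ : ℝ) (hK₁ : 0 < K₁)
    (V : Set (EuclideanSpace ℝ (Fin n))) (hV : IsCompact V)
    (MV : ℝ) (hMV : IsLUB ((fun y => ‖y‖) '' V) MV)
    (hg_bnd : ∃ Cg : ℝ, ∀ τ ∈ Set.Icc (0:ℝ) T, ∀ y ∈ V, |g τ y| ≤ Cg)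
    (hK : ∀ s ∈ Set.Ioc (0:ℝ) T, ∀ z : EuclideanSpace ℝ (Fin n), 1 ≤ ‖z‖ →
      0 ≤ K s z ∧ K s z ≤ K₁ * Real.exp (-‖z‖ ^ 2 / (8 * T)))
    (hrep : ∀ t ∈ Set.Icc (0:ℝ) T, ∀ x,
      u t x = ∫ τ in Set.Ioc (0:ℝ) t, ∫ y in V, K (t - τ) (x - y) * g τ y) :
    ∃ A' : ℝ, 0 < A' ∧ ∃ B' : ℝ, 0 < B' ∧
      ∀ t ∈ Set.Icc (0:ℝ) T, ∀ x : EuclideanSpace ℝ (Fin n), 1 + MV ≤ ‖x‖ →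
        |u t x| ≤ A' * Real.exp (-B' * ‖x‖ ^ 2) := by
  obtain ⟨Cg, hCg⟩ := hg_bnd
  set C := max Cg 0
  have hg : ∀ τ ∈ Icc 0 T, ∀ y ∈ V, |g τ y| ≤ C :=
    fun τ hτ y hy => (hCg τ hτ y hy).trans (le_max_left _ _)
  have hM : ∀ y ∈ V, ‖y‖ ≤ MV := fun y hy => hMV.1 ⟨y, hy, rfl⟩
  set W := volume.real V
  set A := K₁ * C * W * T * Real.exp (MV ^ 2 / (8 * T))
  refine ⟨max A 1, by positivity, 1 / (16 * T), by positivity, fun t ht x hx => ?_⟩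
  have decay := exp_neg_sq_sub_div_le hT ‖x‖ MV
  obtain ⟨ht0, htT⟩ := ht
  rw [hrep t ⟨ht0, htT⟩ x, ← Real.norm_eq_abs]
  calc _ ≤ K₁ * Real.exp (-(‖x‖ - MV) ^ 2 / (8 * T)) * C * W * t :=
        norm_duhamel_integral_le hK₁.le hV.measure_lt_top hK hg hM ⟨ht0, htT⟩ hx
    _ ≤ K₁ * (Real.exp (MV ^ 2 / (8 * T)) * Real.exp (-(1 / (16 * T)) * ‖x‖ ^ 2)) * C * W * T := by
        gcongr
    _ = A * Real.exp (-(1 / (16 * T)) * ‖x‖ ^ 2) := by ring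
    _ ≤ max A 1 * Real.exp (-(1 / (16 * T)) * ‖x‖ ^ 2) := by gcongr; exact le_max_left _ _

/-- Exponential decay at infinity from the representation formula: if `u` is continuous on
`[0,T] × ℝⁿ`, vanishes at `t = 0`, has sub-exponential growth `|u(t,x)| ≤ A e^{B|x|}`, and is
represented as `u(t,x) = ∫₀ᵗ ∫_V K(t-τ, x-y) g(τ,y) dy dτ` with `V` compact, `g` continuous
and bounded on `[0,T] × V`, and `0 ≤ K(s,z) ≤ K₁ e^{-|z|²/(8T)}` for `s ∈ (0,T]`, `|z| ≥ 1`,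
then `|u(t,x)| ≤ A' e^{-B'|x|²}` for all `t ∈ [0,T]` and `|x| ≥ 1 + sup_{y∈V}|y|`. -/
theorem representation_formula_exponential_decay {n : ℕ} (hn : 1 ≤ n)
    (T : ℝ) (hT : 0 < T)
    (u g : ℝ → EuclideanSpace ℝ (Fin n) → ℝ)
    (K : ℝ → EuclideanSpace ℝ (Fin n) → ℝ) (K₁ : ℝ) (hK₁ : 0 < K₁)
    (V : Set (EuclideanSpace ℝ (Fin n))) (hV : IsCompact V) (hVne : V.Nonempty)
    (MV : ℝ) (hMV : IsLUB ((fun y => ‖y‖) '' V) MV)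
    (hu_cont : ContinuousOn (fun p : ℝ × EuclideanSpace ℝ (Fin n) => u p.1 p.2)
      (Set.Icc (0:ℝ) T ×ˢ (Set.univ : Set (EuclideanSpace ℝ (Fin n)))))
    (hu0 : ∀ x, u 0 x = 0)
    (hgrowth : ∃ A : ℝ, 0 < A ∧ ∃ B : ℝ, 0 < B ∧
      ∀ t ∈ Set.Icc (0:ℝ) T, ∀ x, |u t x| ≤ A * Real.exp (B * ‖x‖))
    (hg_cont : ContinuousOn (fun p : ℝ × EuclideanSpace ℝ (Fin n) => g p.1 p.2)
      (Set.Icc (0:ℝ) T ×ˢ V))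
    (hg_bnd : ∃ Cg : ℝ, ∀ τ ∈ Set.Icc (0:ℝ) T, ∀ y ∈ V, |g τ y| ≤ Cg)
    (hK : ∀ s ∈ Set.Ioc (0:ℝ) T, ∀ z : EuclideanSpace ℝ (Fin n), 1 ≤ ‖z‖ →
      0 ≤ K s z ∧ K s z ≤ K₁ * Real.exp (-‖z‖ ^ 2 / (8 * T)))
    (hrep : ∀ t ∈ Set.Icc (0:ℝ) T, ∀ x,
      u t x = ∫ τ in Set.Ioc (0:ℝ) t, ∫ y in V, K (t - τ) (x - y) * g τ y) :
    ∃ A' : ℝ, 0 < A' ∧ ∃ B' : ℝ, 0 < B' ∧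
      ∀ t ∈ Set.Icc (0:ℝ) T, ∀ x : EuclideanSpace ℝ (Fin n), 1 + MV ≤ ‖x‖ →
        |u t x| ≤ A' * Real.exp (-B' * ‖x‖ ^ 2) :=
  representation_formula_exponential_decay_general T hT u g K K₁ hK₁ V hV MV hMV hg_bnd hK hrep
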